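/- For any propositional disjunctive logic program P, WFDS(Lft(P)) = WFDS(P), i.e., the least fixpoint transformation is invariant under the argumentation-based well-founded semantics WFDS. -/
import Mathlib


open scoped Classical

namespace DLP

/-- A (propositional) rule `a₁ ∨ ⋯ ∨ aₙ ← b₁, …, bₘ, not c₁, …, not cₜ`,
with head atoms `head`, positive body atoms `bodyPos` and (default-)negated
body atoms `bodyNeg` (heads and bodies are sets of literals). -/
structure Rule (Atom : Type) where
  head : Finset Atom
  bodyPos : Finset Atom
  bodyNeg : Finset Atom

/-- A pure disjunction: a (positive) disjunction of atoms, or a (negative)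
disjunction of default-negated atoms. -/
inductive PDisj (Atom : Type) where
  | pos : Finset Atom → PDisj Atom
  | neg : Finset Atom → PDisj Atom

/-- The atoms occurring in a pure disjunction. -/
def PDisj.atomsOf {Atom : Type} : PDisj Atom → Finset Atom
  | .pos A => A
  | .neg A => A

/-- Sub-disjunction relation between pure disjunctions (same polarity). -/
def SubDisj {Atom : Type} : PDisj Atom → PDisj Atom → Prop
  | .pos A, .pos B => A ⊆ B
  | .neg A, .neg B => A ⊆ B
  | .pos _, .neg _ => False
  | .neg _, .pos _ => False

/-- A disjunctive logic program: a set of rules (over a finite atom alphabet,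
so every program is finite). -/
abbrev Program (Atom : Type) := Set (Rule Atom)

variable {Atom : Type} [Fintype Atom] [DecidableEq Atom]

/-- Well-formedness: every rule head is nonempty (n > 0). -/
def IsProgram (P : Program Atom) : Prop := ∀ r ∈ P, r.head.Nonempty

/-- The atoms occurring in rule heads of `P`. -/
def heads (P : Program Atom) : Set Atom := {a | ∃ r ∈ P, a ∈ r.head}

/-- Closure of a set of pure disjunctions under super-disjunctions
(model states are assumed closed under implication of pure disjunctions). -/
def stClosure (S : Set (PDisj Atom)) : Set (PDisj Atom) := {d' | ∃ d ∈ S, SubDisj d d'}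

/-- A model state: a set of (nonempty) pure disjunctions closed under
super-disjunctions. -/
def IsModelState (S : Set (PDisj Atom)) : Prop :=
  (∀ d ∈ S, (PDisj.atomsOf d).Nonempty) ∧ ∀ d ∈ S, ∀ d', SubDisj d d' → d' ∈ S

/-- Consistency of a model state. -/
def ConsistentState (S : Set (PDisj Atom)) : Prop :=
  (¬ ∃ A : Finset Atom, A.Nonempty ∧ PDisj.pos A ∈ S ∧ ∀ a ∈ A, PDisj.neg {a} ∈ S) ∧
  (¬ ∃ A : Finset Atom, A.Nonempty ∧ PDisj.neg A ∈ S ∧ ∀ a ∈ A, PDisj.pos {a} ∈ S)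

/-! ### Classical inference for (positive) programs -/

/-- An interpretation `I` satisfies a rule (read classically). -/
def SatisfiesRule (I : Set Atom) (r : Rule Atom) : Prop :=
  ((↑r.bodyPos : Set Atom) ⊆ I ∧ ∀ c ∈ r.bodyNeg, c ∉ I) → ∃ a ∈ r.head, a ∈ I

/-- Classical propositional entailment of a positive disjunction from a program. -/
def Entails (P : Program Atom) (A : Finset Atom) : Prop :=
  ∀ I : Set Atom, (∀ r ∈ P, SatisfiesRule I r) → ∃ a ∈ A, a ∈ I

/-- The least model state of a positive program: all entailed positive disjunctions. -/
def msState (P : Program Atom) : Set (Finset Atom) := {A | A.Nonempty ∧ Entails P A}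

/-- Canonical form: the minimal disjunctions of `S`. -/
def canonical (S : Set (Finset Atom)) : Set (Finset Atom) := {A | A ∈ S ∧ ¬ ∃ A' ∈ S, A' ⊂ A}

/-! ### Argumentation: hypotheses, support, attack, WFDS -/

/-- A hypothesis: a set of (nonempty) negative disjunctions, each represented
by its finite set of atoms. -/
def IsHyp (Δ : Set (Finset Atom)) : Prop := ∀ D ∈ Δ, D.Nonempty

/-- The reduct `P⁺_Δ` of `P` with respect to a hypothesis `Δ`. -/
def reduct (P : Program Atom) (Δ : Set (Finset Atom)) : Program Atom :=
  {r' | ∃ r ∈ P, (∀ c ∈ r.bodyNeg, ({c} : Finset Atom) ∈ Δ) ∧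
    r' = ⟨r.head, r.bodyPos, ∅⟩}

/-- `Δ ⊢_P A`: `Δ` is a supporting hypothesis for the positive disjunction `A`. -/
def Supports (P : Program Atom) (Δ : Set (Finset Atom)) (A : Finset Atom) : Prop :=
  ∃ B : Finset Atom, (∀ b ∈ B, ({b} : Finset Atom) ∈ Δ) ∧
    A ∪ B ∈ canonical (msState (reduct P Δ))

/-- Attack relation, parameterized by a support relation `sup`. -/
def AttacksWith (sup : Set (Finset Atom) → Finset Atom → Prop)
    (Δ Δ' : Set (Finset Atom)) : Prop :=
  (∃ β ∈ Δ', β.Nonempty ∧ ∀ b ∈ β, sup Δ {b}) ∨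
  (∃ B : Finset Atom, B.Nonempty ∧ (∀ b ∈ B, ({b} : Finset Atom) ∈ Δ') ∧ sup Δ B)

/-- The assumption `not a` is admissible with respect to `Δ`. -/
def AdmissibleWith (sup : Set (Finset Atom) → Finset Atom → Prop)
    (Δ : Set (Finset Atom)) (a : Atom) : Prop :=
  ∀ Δ' : Set (Finset Atom), IsHyp Δ' →
    AttacksWith sup Δ' {({a} : Finset Atom)} → AttacksWith sup Δ Δ'

/-- The operator `A_P`. -/
def AOpWith (sup : Set (Finset Atom) → Finset Atom → Prop)
    (Δ : Set (Finset Atom)) : Set (Finset Atom) :=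
  {D | D.Nonempty ∧ ∃ a ∈ D, AdmissibleWith sup Δ a}

/-- The well-founded disjunctive hypothesis: least fixpoint of `A_P`
(obtained by iteration from the empty hypothesis). -/
def WFDHWith (sup : Set (Finset Atom) → Finset Atom → Prop) : Set (Finset Atom) :=
  ⋃ k : ℕ, (AOpWith sup)^[k] ∅

/-- The induced well-founded model state `WFDH ∪ cons(WFDH)`
(closed under super-disjunctions). -/
def WFDSWith (sup : Set (Finset Atom) → Finset Atom → Prop) : Set (PDisj Atom) :=
  stClosure ({d | ∃ D ∈ WFDHWith sup, d = PDisj.neg D} ∪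
    {d | ∃ A : Finset Atom, A.Nonempty ∧ sup (WFDHWith sup) A ∧ d = PDisj.pos A})

/-- The attack relation `⇝_P` of `P`. -/
def Attacks (P : Program Atom) : Set (Finset Atom) → Set (Finset Atom) → Prop :=
  AttacksWith (Supports P)

/-- `WFDH(P)`. -/
def WFDH (P : Program Atom) : Set (Finset Atom) := WFDHWith (Supports P)

/-- `WFDS(P)`, the argumentation-based well-founded semantics. -/
def WFDS (P : Program Atom) : Set (PDisj Atom) := WFDSWith (Supports P)

/-! ### The hyperresolution operator `T^S` and the alternative semantics WFDS' -/

/-- The immediate consequence operator `T_Q^S` of a positive program `Q`. -/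
def TS (Q : Program Atom) (J : Set (Finset Atom)) : Set (Finset Atom) :=
  {A | ∃ r ∈ Q, ∃ f : Atom → Finset Atom,
    (∀ b ∈ r.bodyPos, insert b (f b) ∈ J) ∧ A = r.head ∪ r.bodyPos.biUnion f}

/-- `T_Q^S ↑ ω`. -/
def TSomega (Q : Program Atom) : Set (Finset Atom) := ⋃ k : ℕ, (TS Q)^[k] ∅

/-- `Δ ⊢'_P A`: support via the fixpoint of the hyperresolution operator. -/
def Supports' (P : Program Atom) (Δ : Set (Finset Atom)) (A : Finset Atom) : Prop :=
  ∃ B : Finset Atom, (∀ b ∈ B, ({b} : Finset Atom) ∈ Δ) ∧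
    A ∪ B ∈ TSomega (reduct P Δ)

/-- `WFDS'(P)`: as `WFDS(P)` but with `⊢_P` replaced by `⊢'_P` throughout. -/
def WFDS' (P : Program Atom) : Set (PDisj Atom) := WFDSWith (Supports' P)

/-! ### Program transformations -/

/-- `r'` is an implication of `r`. -/
def Implication (r' r : Rule Atom) : Prop :=
  r.head ⊆ r'.head ∧ r.bodyPos ⊆ r'.bodyPos ∧ r.bodyNeg ⊆ r'.bodyNeg ∧
    (r.head ⊂ r'.head ∨ r.bodyPos ⊂ r'.bodyPos ∨ r.bodyNeg ⊂ r'.bodyNeg)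

/-- `r'` is an s-implication of `r`: `r' ≠ r` and either `r'` is an implication of `r`,
or `r` can be obtained from `r'` by changing some negative body literals of `r'`
into head atoms and possibly removing some body literals. -/
def SImplication (r' r : Rule Atom) : Prop :=
  r' ≠ r ∧ (Implication r' r ∨
    ∃ V ⊆ r'.bodyNeg, r.head = r'.head ∪ V ∧ r.bodyPos ⊆ r'.bodyPos ∧
      r.bodyNeg ⊆ r'.bodyNeg \ V)

/-- Unfolding. -/
def Unfolding (P1 P2 : Program Atom) : Prop :=
  ∃ r ∈ P1, ∃ b ∈ r.bodyPos,
    P2 = (P1 \ {r}) ∪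
      {r'' | ∃ r' ∈ P1, b ∈ r'.head ∧
        r'' = ⟨r.head ∪ r'.head.erase b, r.bodyPos.erase b ∪ r'.bodyPos,
               r.bodyNeg ∪ r'.bodyNeg⟩}

/-- Elimination of tautologies. -/
def ElimTaut (P1 P2 : Program Atom) : Prop :=
  ∃ r ∈ P1, (r.head ∩ r.bodyPos).Nonempty ∧ P2 = P1 \ {r}

/-- Elimination of s-implications. -/
def ElimSImpl (P1 P2 : Program Atom) : Prop :=
  ∃ r' ∈ P1, (∃ r ∈ P1, SImplication r' r) ∧ P2 = P1 \ {r'}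

/-- Elimination of nonminimal rules. -/
def ElimNonmin (P1 P2 : Program Atom) : Prop :=
  ∃ r' ∈ P1, (∃ r ∈ P1, r' ≠ r ∧ Implication r' r) ∧ P2 = P1 \ {r'}

/-- Positive reduction. -/
def PosRed (P1 P2 : Program Atom) : Prop :=
  ∃ r ∈ P1, ∃ c ∈ r.bodyNeg, c ∉ heads P1 ∧
    P2 = (P1 \ {r}) ∪ {(⟨r.head, r.bodyPos, r.bodyNeg.erase c⟩ : Rule Atom)}

/-- Negative reduction. -/
def NegRed (P1 P2 : Program Atom) : Prop :=
  ∃ r ∈ P1, (∃ r' ∈ P1, r'.bodyPos = ∅ ∧ r'.bodyNeg = ∅ ∧ r'.head ⊆ r.bodyNeg) ∧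
    P2 = P1 \ {r}

/-! ### BD-semantics and the transformation-based semantics -/

/-- An (abstract) BD-semantics. -/
structure BDSemantics (Atom : Type) [Fintype Atom] [DecidableEq Atom] where
  sem : Program Atom → Set (PDisj Atom)
  nonempty_mem : ∀ P : Program Atom, IsProgram P → ∀ d ∈ sem P, (PDisj.atomsOf d).Nonempty
  closed : ∀ P : Program Atom, IsProgram P → ∀ d ∈ sem P, ∀ d', SubDisj d d' → d' ∈ sem P
  fact_mem : ∀ P : Program Atom, IsProgram P → ∀ r ∈ P, r.bodyPos = ∅ → r.bodyNeg = ∅ →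
    PDisj.pos r.head ∈ sem P
  neg_mem : ∀ P : Program Atom, IsProgram P → ∀ a : Atom, a ∉ heads P →
    PDisj.neg {a} ∈ sem P

/-- A BD-semantics `S` allows (is invariant under) a program transformation `T`. -/
def Allows (S : BDSemantics Atom) (T : Program Atom → Program Atom → Prop) : Prop :=
  ∀ P1 P2 : Program Atom, IsProgram P1 → IsProgram P2 → T P1 P2 → S.sem P1 = S.sem P2

/-- `S` allows all program transformations in `T*_WFS`. -/
def AllowsStar (S : BDSemantics Atom) : Prop :=
  Allows S Unfolding ∧ Allows S ElimTaut ∧ Allows S ElimSImpl ∧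
    Allows S PosRed ∧ Allows S NegRed

/-- `S` allows all program transformations in `T_WFS`. -/
def AllowsWFSset (S : BDSemantics Atom) : Prop :=
  Allows S Unfolding ∧ Allows S ElimTaut ∧ Allows S ElimNonmin ∧
    Allows S PosRed ∧ Allows S NegRed

/-- `D-WFS*`: the weakest BD-semantics allowing all transformations in `T*_WFS`. -/
def DWFSstar (P : Program Atom) : Set (PDisj Atom) :=
  ⋂ S ∈ {S : BDSemantics Atom | AllowsStar S}, S.sem P

/-- `D-WFS`: the weakest BD-semantics allowing all transformations in `T_WFS`. -/
def DWFS (P : Program Atom) : Set (PDisj Atom) :=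
  ⋂ S ∈ {S : BDSemantics Atom | AllowsWFSset S}, S.sem P

/-! ### The least fixpoint transformation and the strong residual program -/

/-- The generalized consequence operator `T_P^G` on sets of conditional facts. -/
def TG (P : Program Atom) (J : Set (Rule Atom)) : Set (Rule Atom) :=
  {C | ∃ r ∈ P, ∃ hf : Atom → Finset Atom, ∃ bf : Atom → Finset Atom,
    (∀ b ∈ r.bodyPos, (⟨insert b (hf b), ∅, bf b⟩ : Rule Atom) ∈ J) ∧
    C = ⟨r.head ∪ r.bodyPos.biUnion hf, ∅, r.bodyNeg ∪ r.bodyPos.biUnion bf⟩}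

/-- The least fixpoint transformation `Lft(P) = T_P^G ↑ ω`, a negative program. -/
def Lft (P : Program Atom) : Program Atom := ⋃ k : ℕ, (TG P)^[k] ∅

/-- The strong reduction operator `R*` on negative programs. -/
noncomputable def Rstar (N : Program Atom) : Program Atom :=
  {r' | ∃ r ∈ N, (¬ ∃ r'' ∈ N, SImplication r r'') ∧
    r' = ⟨r.head, r.bodyPos, r.bodyNeg.filter (fun c => c ∈ heads N)⟩}

/-- The strong residual program `res*(P)`: the fixpoint reached by iterating `R*`
starting from `Lft(P)`. -/
noncomputable def resStar (P : Program Atom) : Program Atom :=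
  if h : ∃ k : ℕ, Rstar ((Rstar (Atom := Atom))^[k] (Lft P)) = (Rstar (Atom := Atom))^[k] (Lft P)
  then (Rstar (Atom := Atom))^[Nat.find h] (Lft P)
  else ∅

/-! ### Unfounded sets -/

/-- `body(r)` is true with respect to the model state `S`. -/
def BodyTrue (S : Set (PDisj Atom)) (r : Rule Atom) : Prop :=
  (∀ b ∈ r.bodyPos, PDisj.pos {b} ∈ S) ∧ (∀ c ∈ r.bodyNeg, PDisj.neg {c} ∈ S)

/-- `body(r)` is false with respect to the model state `S`. -/
def BodyFalse (S : Set (PDisj Atom)) (r : Rule Atom) : Prop :=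
  (∃ b ∈ r.bodyPos, PDisj.neg {b} ∈ S) ∨ (∃ c ∈ r.bodyNeg, PDisj.pos {c} ∈ S) ∨
  (∃ A : Finset Atom, A.Nonempty ∧ A ⊆ r.bodyNeg ∧ PDisj.pos A ∈ S)

/-- `X` is an unfounded set for `P` with respect to the model state `S`. -/
def Unfounded (P : Program Atom) (S : Set (PDisj Atom)) (X : Set Atom) : Prop :=
  ∀ a ∈ X, ∀ r ∈ P, a ∈ r.head →
    BodyFalse S r ∨ (∃ x ∈ X, x ∈ r.bodyPos) ∨
    (BodyTrue S r → ∃ A : Finset Atom, A.Nonempty ∧ (↑A : Set Atom) ⊆ (↑r.head : Set Atom) \ X ∧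
      PDisj.pos A ∈ S)

/-- The candidate greatest unfounded set: the union of all unfounded sets
(it is the greatest unfounded set exactly when it is itself unfounded). -/
def UP (P : Program Atom) (S : Set (PDisj Atom)) : Set Atom := ⋃₀ {X | Unfounded P S X}

/-- The operator `T_P` on model states. -/
def TPop (P : Program Atom) (S : Set (PDisj Atom)) : Set (Finset Atom) :=
  {A | A.Nonempty ∧ ∃ r ∈ P, BodyTrue S r ∧ A ⊆ r.head ∧
    ∀ a ∈ r.head, a ∉ A → PDisj.neg {a} ∈ S}

/-- The operator `W_P(S) = T_P(S) ∪ not.U_P(S)`. -/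
def WP (P : Program Atom) (S : Set (PDisj Atom)) : Set (PDisj Atom) :=
  {d | ∃ A ∈ TPop P S, d = PDisj.pos A} ∪ {d | ∃ p ∈ UP P S, d = PDisj.neg ({p} : Finset Atom)}

/-- The sequence `W_0 = ∅`, `W_k = W_P(W_{k-1})`. -/
def Wseq (P : Program Atom) (k : ℕ) : Set (PDisj Atom) := (WP P)^[k] ∅

/-- `U-WFS(P)`: the least fixpoint of `W_P` (closed under super-disjunctions). -/
def UWFS (P : Program Atom) : Set (PDisj Atom) := stClosure (⋃ k : ℕ, Wseq P k)

section LftAux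

variable {Atom : Type} [Fintype Atom] [DecidableEq Atom]

lemma TG_mono (P : Program Atom) {J J' : Set (Rule Atom)} (h : J ⊆ J') :
    TG P J ⊆ TG P J' := by
  rintro C ⟨r, hr, hf, bf, hfacts, rfl⟩
  exact ⟨r, hr, hf, bf, fun b hb => h (hfacts b hb), rfl⟩

lemma TG_iter_mono (P : Program Atom) : ∀ {k l : ℕ}, k ≤ l →
    (TG P)^[k] ∅ ⊆ (TG P)^[l] ∅ := by
  have hstep : ∀ k, (TG P)^[k] (∅ : Set (Rule Atom)) ⊆ (TG P)^[k+1] ∅ := by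
    intro k
    induction k with
    | zero => simp
    | succ n ih =>
      rw [Function.iterate_succ_apply', Function.iterate_succ_apply']
      exact TG_mono P ih
  intro k l h
  induction h with
  | refl => exact subset_rfl
  | step h ih => exact ih.trans (hstep _)

lemma lft_bodyPos (P : Program Atom) {C : Rule Atom} (h : C ∈ Lft P) :
    C.bodyPos = ∅ := by
  obtain ⟨k, hk⟩ := Set.mem_iUnion.mp h
  cases k with
  | zero => simp at hk
  | succ n =>
    rw [Function.iterate_succ_apply'] at hk
    obtain ⟨r, hr, hf, bf, hfacts, rfl⟩ := hk
    rfl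

lemma TG_lft_subset (P : Program Atom) : TG P (Lft P) ⊆ Lft P := by
  rintro C ⟨r, hr, hf, bf, hfacts, rfl⟩
  have hch : ∀ b : Atom, ∃ k : ℕ, b ∈ r.bodyPos →
      (⟨insert b (hf b), ∅, bf b⟩ : Rule Atom) ∈ (TG P)^[k] ∅ := by
    intro b
    by_cases hb : b ∈ r.bodyPos
    · obtain ⟨k, hk⟩ := Set.mem_iUnion.mp (hfacts b hb)
      exact ⟨k, fun _ => hk⟩
    · exact ⟨0, fun h => absurd h hb⟩
  choose g hg using hch
  refine Set.mem_iUnion.mpr ⟨r.bodyPos.sup g + 1, ?_⟩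
  rw [Function.iterate_succ_apply']
  exact ⟨r, hr, hf, bf, fun b hb =>
    TG_iter_mono P (Finset.le_sup hb) (hg b hb), rfl⟩

lemma lft_sound (P : Program Atom) (Δ : Set (Finset Atom)) (I : Set Atom)
    (hI : ∀ r ∈ reduct P Δ, SatisfiesRule I r) :
    ∀ r ∈ reduct (Lft P) Δ, SatisfiesRule I r := by
  have key : ∀ k : ℕ, ∀ C ∈ (TG P)^[k] (∅ : Set (Rule Atom)),
      (∀ c ∈ C.bodyNeg, ({c} : Finset Atom) ∈ Δ) → ∃ a ∈ C.head, a ∈ I := by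
    intro k
    induction k with
    | zero => simp
    | succ n ih =>
      rw [Function.iterate_succ_apply']
      rintro C ⟨r, hr, hf, bf, hfacts, rfl⟩ hneg
      by_cases hall : ∀ b ∈ r.bodyPos, b ∈ I
      · have hred : (⟨r.head, r.bodyPos, ∅⟩ : Rule Atom) ∈ reduct P Δ :=
          ⟨r, hr, fun c hc => hneg c (Finset.mem_union_left _ hc), rfl⟩
        obtain ⟨a, ha, haI⟩ := hI _ hred
          ⟨fun b hb => hall b (by simpa using hb), by simp⟩
        exact ⟨a, Finset.mem_union_left _ ha, haI⟩
      · push_neg at hall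
        obtain ⟨b, hb, hbI⟩ := hall
        obtain ⟨a, ha, haI⟩ := ih _ (hfacts b hb) (fun c hc => hneg c
          (Finset.mem_union_right _ (Finset.mem_biUnion.mpr ⟨b, hb, hc⟩)))
        rcases Finset.mem_insert.mp ha with rfl | ha'
        · exact absurd haI hbI
        · exact ⟨a, Finset.mem_union_right _ (Finset.mem_biUnion.mpr ⟨b, hb, ha'⟩), haI⟩
  rintro r' ⟨C, hC, hneg, rfl⟩
  obtain ⟨k, hk⟩ := Set.mem_iUnion.mp hC
  intro _
  obtain ⟨a, ha, haI⟩ := key k C hk hneg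
  exact ⟨a, ha, haI⟩

lemma exists_min_model (N : Program Atom) :
    ∀ n : ℕ, ∀ I : Set Atom, I.ncard ≤ n → (∀ r ∈ N, SatisfiesRule I r) →
    ∃ J : Set Atom, J ⊆ I ∧ (∀ r ∈ N, SatisfiesRule J r) ∧
      ∀ b ∈ J, ¬ (∀ r ∈ N, SatisfiesRule (J \ {b}) r) := by
  intro n
  induction n with
  | zero =>
    intro I hcard hmod
    refine ⟨I, subset_rfl, hmod, ?_⟩
    intro b hb _
    have : I = ∅ := (Set.ncard_eq_zero (Set.toFinite I)).mp (Nat.le_zero.mp hcard)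
    simp [this] at hb
  | succ n ih =>
    intro I hcard hmod
    by_cases hmin : ∀ b ∈ I, ¬ (∀ r ∈ N, SatisfiesRule (I \ {b}) r)
    · exact ⟨I, subset_rfl, hmod, hmin⟩
    · push_neg at hmin
      obtain ⟨b, hb, hmod'⟩ := hmin
      have hlt : (I \ {b}).ncard ≤ n := by
        have h1 : (I \ {b}).ncard < I.ncard :=
          Set.ncard_diff_singleton_lt_of_mem hb (Set.toFinite I)
        omega
      obtain ⟨J, hJ1, hJ2, hJ3⟩ := ih (I \ {b}) hlt hmod'
      exact ⟨J, hJ1.trans Set.diff_subset, hJ2, hJ3⟩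

lemma lft_complete (P : Program Atom) (Δ : Set (Finset Atom)) (A : Finset Atom)
    (h : Entails (reduct P Δ) A) : Entails (reduct (Lft P) Δ) A := by
  intro I hI
  by_contra hA
  push_neg at hA
  obtain ⟨J, hJI, hJmod, hJmin⟩ :=
    exists_min_model (reduct (Lft P) Δ) I.ncard I le_rfl hI
  have hJP : ∀ r ∈ reduct P Δ, SatisfiesRule J r := by
    rintro r' ⟨r0, hr0, hneg0, rfl⟩
    rintro ⟨hpos, -⟩
    by_contra hnohead
    push_neg at hnohead
    have hsel : ∀ b : Atom, ∃ C : Rule Atom, b ∈ r0.bodyPos →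
        C ∈ Lft P ∧ (∀ c ∈ C.bodyNeg, ({c} : Finset Atom) ∈ Δ) ∧
        b ∈ C.head ∧ ∀ a ∈ C.head, a ∈ J → a = b := by
      intro b
      by_cases hb : b ∈ r0.bodyPos
      · have hbJ : b ∈ J := hpos (by simpa using hb)
        have hmin := hJmin b hbJ
        push_neg at hmin
        obtain ⟨rr, hrr, hrrns⟩ := hmin
        obtain ⟨C, hC, hCneg, rfl⟩ := hrr
        have hCpos : C.bodyPos = ∅ := lft_bodyPos P hC
        have hsat := hJmod _ ⟨C, hC, hCneg, rfl⟩
        rw [SatisfiesRule] at hrrns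
        push_neg at hrrns
        obtain ⟨-, hno⟩ := hrrns
        obtain ⟨a, ha, haJ⟩ := hsat ⟨by simp [hCpos], by simp⟩
        have key : ∀ a ∈ C.head, a ∈ J → a = b := by
          intro a ha haJ
          by_contra hne
          exact hno a ha ⟨haJ, by simpa using hne⟩
        exact ⟨C, fun _ => ⟨hC, hCneg, (key a ha haJ) ▸ ha, key⟩⟩
      · exact ⟨⟨∅, ∅, ∅⟩, fun h => absurd h hb⟩
    choose g hg using hsel
    set hf : Atom → Finset Atom := fun b => (g b).head.erase b with hhf
    set bf : Atom → Finset Atom := fun b => (g b).bodyNeg with hbf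
    have hCstar : (⟨r0.head ∪ r0.bodyPos.biUnion hf, ∅,
        r0.bodyNeg ∪ r0.bodyPos.biUnion bf⟩ : Rule Atom) ∈ Lft P := by
      apply TG_lft_subset P
      refine ⟨r0, hr0, hf, bf, ?_, rfl⟩
      intro b hb
      obtain ⟨hmem, hnegC, hbh, hkey⟩ := hg b hb
      have h1 : insert b (hf b) = (g b).head := by
        simp [hhf, Finset.insert_erase hbh]
      have hpos0 : (g b).bodyPos = ∅ := lft_bodyPos P hmem
      have h2 : (⟨(g b).head, ∅, (g b).bodyNeg⟩ : Rule Atom) = g b := by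
        cases hgb : g b with
        | mk hh pp nn => simp_all
      rw [h1, hbf, h2]
      exact hmem
    have hrr : (⟨r0.head ∪ r0.bodyPos.biUnion hf, (∅ : Finset Atom), ∅⟩ : Rule Atom)
        ∈ reduct (Lft P) Δ := by
      refine ⟨_, hCstar, ?_, rfl⟩
      intro c hc
      rcases Finset.mem_union.mp hc with h1 | h2
      · exact hneg0 c h1
      · obtain ⟨b, hb, hcb⟩ := Finset.mem_biUnion.mp h2
        exact (hg b hb).2.1 c hcb
    obtain ⟨a, ha, haJ⟩ := hJmod _ hrr ⟨by simp, by simp⟩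
    rcases Finset.mem_union.mp ha with h1 | h2
    · exact hnohead a h1 haJ
    · obtain ⟨b, hb, hab⟩ := Finset.mem_biUnion.mp h2
      obtain ⟨hane, hah⟩ := Finset.mem_erase.mp hab
      exact hane ((hg b hb).2.2.2 a hah haJ)
  obtain ⟨a, ha, haJ⟩ := h J hJP
  exact hA a ha (hJI haJ)

lemma entails_lft (P : Program Atom) (Δ : Set (Finset Atom)) (A : Finset Atom) :
    Entails (reduct (Lft P) Δ) A ↔ Entails (reduct P Δ) A :=
  ⟨fun h I hI => h I (lft_sound P Δ I hI), lft_complete P Δ A⟩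

lemma supports_lft (P : Program Atom) : Supports (Lft P) = Supports P := by
  funext Δ A
  have hms : msState (reduct (Lft P) Δ) = msState (reduct P Δ) := by
    ext B
    simp only [msState, Set.mem_setOf_eq]
    exact and_congr_right fun _ => entails_lft P Δ B
  simp only [Supports, hms]

end LftAux

/-- For any propositional disjunctive logic program `P`,
`WFDS(Lft(P)) = WFDS(P)`: the least fixpoint transformation is invariant under the
argumentation-based well-founded semantics `WFDS`. -/
theorem wfds_lft_eq
    {Atom : Type} [Fintype Atom] [DecidableEq Atom]
    (P : Program Atom) (hP : IsProgram P) :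
    WFDS (Lft P) = WFDS P := by
  show WFDSWith (Supports (Lft P)) = WFDSWith (Supports P)
  rw [supports_lft]

end DLP
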